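/- arXiv:2502.11606 — 5 statements merged into one kernel-verified Lean document; each statement's English description precedes it below -/
import Mathlib

section
/- In the free algebra Q⟨x,y⟩, the polynomials g_n = x y^n x + a_n y^n x − b_n x y^n − y^n (for n ≥ 1, where a_n = F_{n-1}/F_n and b_n = F_{n+1}/F_n are ratios of Fibonacci numbers) satisfy the recursion g_{n+1} = (−1/b_n)·( g_n · y · (x − 1) − (x + a_n) · y^n · g_1 ) for all n ≥ 1. -/
open FreeAlgebra in
theorem g_recursion
    (x y : FreeAlgebra ℚ (Fin 2)) (hx : x = FreeAlgebra.ι ℚ 0) (hy : y = FreeAlgebra.ι ℚ 1)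
    (a b : ℕ → ℚ)
    (ha : ∀ n, a n = (Nat.fib (n - 1) : ℚ) / Nat.fib n)
    (hb : ∀ n, b n = (Nat.fib (n + 1) : ℚ) / Nat.fib n)
    (g : ℕ → FreeAlgebra ℚ (Fin 2))
    (hg : ∀ n, g n = x * y ^ n * x + a n • (y ^ n * x) - b n • (x * y ^ n) - y ^ n)
    (n : ℕ) (hn : 1 ≤ n) :
    g (n + 1) = (-(1 / b n)) •
      (g n * y * (x - 1) - (x + algebraMap ℚ (FreeAlgebra ℚ (Fin 2)) (a n)) * y ^ n * g 1) := by
  have hfn : (Nat.fib n : ℚ) ≠ 0 := by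
    exact_mod_cast (Nat.fib_pos.mpr (by omega)).ne'
  have hfn1 : (Nat.fib (n+1) : ℚ) ≠ 0 := by
    exact_mod_cast (Nat.fib_pos.mpr (by omega)).ne'
  have hfib : (Nat.fib (n+1) : ℚ) = Nat.fib n + Nat.fib (n-1) := by
    have h : n = (n-1) + 1 := by omega
    rw [h]
    push_cast [Nat.fib_add_two]
    ring
  have ha1 : a 1 = 0 := by simp [ha]
  have hb1 : b 1 = 1 := by norm_num [hb]
  simp only [hg, ha1, hb1, zero_smul, one_smul, pow_one, add_zero, sub_zero]
  simp only [mul_add, add_mul, mul_sub, sub_mul, smul_mul_assoc, mul_smul_comm,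
    mul_assoc, pow_succ, mul_one, ← Algebra.smul_def]
  have h2 : (Nat.fib (n+2) : ℚ) = Nat.fib (n+1) + Nat.fib n := by
    push_cast [Nat.fib_add_two]; ring
  match_scalars
  all_goals
    simp only [ha, hb, Nat.add_sub_cancel]
    field_simp
    try ring
  all_goals
    simp only [show 2+n = n+2 from by omega, show 1+n = n+1 from by omega]
    try rw [h2]
    rw [hfib]
    ring
end

section
/- In the free algebra Q⟨x,y⟩, every element g_n = x y^n x + a_n y^n x − b_n x y^n − y^n (n ≥ 1) lies in the two-sided ideal generated by g_1 = xyx − xy − y. -/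
theorem g_mem_twoSidedIdeal
    (x y : FreeAlgebra ℚ (Fin 2)) (hx : x = FreeAlgebra.ι ℚ 0) (hy : y = FreeAlgebra.ι ℚ 1)
    (a b : ℕ → ℚ)
    (ha : ∀ n, a n = (Nat.fib (n - 1) : ℚ) / Nat.fib n)
    (hb : ∀ n, b n = (Nat.fib (n + 1) : ℚ) / Nat.fib n)
    (g : ℕ → FreeAlgebra ℚ (Fin 2))
    (hg : ∀ n, g n = x * y ^ n * x + a n • (y ^ n * x) - b n • (x * y ^ n) - y ^ n)
    (n : ℕ) (hn : 1 ≤ n) :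
    g n ∈ TwoSidedIdeal.span {x * y * x - x * y - y} := by
  induction n, hn using Nat.le_induction with
  | base =>
    have h1 : g 1 = x * y * x - x * y - y := by
      rw [hg 1, ha 1, hb 1]
      norm_num
    rw [h1]
    exact TwoSidedIdeal.subset_span rfl
  | succ n hn ih =>
    obtain ⟨m, rfl⟩ := Nat.exists_eq_add_of_le hn
    set N := 1 + m with hN
    have hf1 : (Nat.fib (N) : ℚ) ≠ 0 := by
      have := Nat.fib_pos.mpr (by omega : 0 < N)
      positivity
    have hf2 : (Nat.fib (N + 1) : ℚ) ≠ 0 := by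
      have := Nat.fib_pos.mpr (by omega : 0 < N + 1)
      positivity
    have haN : a N = (Nat.fib (N - 1) : ℚ) / Nat.fib N := ha N
    have haN1 : a (N + 1) = (Nat.fib N : ℚ) / Nat.fib (N + 1) := by
      rw [ha (N + 1)]; norm_num
    have hfibN : (Nat.fib (N + 1) : ℚ) = Nat.fib (N - 1) + Nat.fib N := by
      have h : Nat.fib (N + 1) = Nat.fib (N - 1) + Nat.fib N := by
        rw [show N + 1 = (N - 1) + 2 by omega, Nat.fib_add_two,
          show N - 1 + 1 = N by omega]
      exact_mod_cast h
    have hfibN1 : (Nat.fib (N + 2) : ℚ) = Nat.fib N + Nat.fib (N + 1) := by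
      rw [Nat.fib_add_two]; push_cast; ring
    have h1 : a (N + 1) * b N = 1 := by
      rw [haN1, hb N]
      field_simp
    have hab : a N + 1 = b N := by
      rw [haN, hb N, hfibN]
      field_simp
    have h2 : a (N + 1) * a N + a (N + 1) = 1 := by
      linear_combination h1 + a (N + 1) * hab
    have h3 : b (N + 1) = 1 + a (N + 1) := by
      rw [hb (N + 1), haN1]
      field_simp
      linarith [hfibN1]
    have key : g (N + 1)
        = a (N + 1) • (x * y * g N)
          + (x * y * x - x * y - y) * y ^ N
          - a (N + 1) • ((x * y * x - x * y - y) * (y ^ N * x)) := by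
      rw [hg (N + 1), hg N, h3]
      simp only [mul_sub, sub_mul, mul_add, add_mul, smul_sub, smul_add, smul_smul,
        mul_smul_comm, smul_mul_assoc, pow_succ', mul_assoc]
      match_scalars <;> linarith [h1, h2]
    rw [key]
    set I := TwoSidedIdeal.span {x * y * x - x * y - y} with hI
    have hgen : (x * y * x - x * y - y) ∈ I := TwoSidedIdeal.subset_span rfl
    have hsmul : ∀ (q : ℚ) (z : FreeAlgebra ℚ (Fin 2)), z ∈ I → q • z ∈ I := by
      intro q z hz
      rw [Algebra.smul_def]
      exact I.mul_mem_left _ _ hz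
    exact I.sub_mem
      (I.add_mem (hsmul _ _ (I.mul_mem_left _ _ ih)) (I.mul_mem_right _ _ hgen))
      (hsmul _ _ (I.mul_mem_right _ _ hgen))
end

section
/- Let p be a prime and let N be the smallest positive integer with p dividing F_N (the N-th Fibonacci number). Then in the free algebra F_p⟨x,y⟩ over the field with p elements, the element y^N x − x y^N lies in the two-sided ideal generated by xyx − xy − y. -/
theorem comm_mem_twoSidedIdeal_mod_p
    (p : ℕ) (hp : p.Prime) (N : ℕ) (hN : 0 < N) (hdvd : p ∣ Nat.fib N)
    (hmin : ∀ m, 0 < m → p ∣ Nat.fib m → N ≤ m)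
    (x y : FreeAlgebra (ZMod p) (Fin 2))
    (hx : x = FreeAlgebra.ι (ZMod p) 0) (hy : y = FreeAlgebra.ι (ZMod p) 1) :
    y ^ N * x - x * y ^ N ∈ TwoSidedIdeal.span {x * y * x - x * y - y} := by
  haveI := Fact.mk hp
  clear hx hy
  set g := x * y * x - x * y - y with hg
  set I := TwoSidedIdeal.span {g} with hI
  have hgI : g ∈ I := TwoSidedIdeal.subset_span (Set.mem_singleton g)
  have key : ∀ n : ℕ,
      (Nat.fib (n+1)) • (x * y^(n+1) * x) + (Nat.fib n) • (y^(n+1) * x)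
        - (Nat.fib (n+2)) • (x * y^(n+1)) - (Nat.fib (n+1)) • (y^(n+1)) ∈ I := by
    intro n
    induction n with
    | zero => simpa using hgI
    | succ n ih =>
      have hrec : ∀ z : FreeAlgebra (ZMod p) (Fin 2),
          (Nat.fib (n+1+1)) • (x * (y * z) * x) + (Nat.fib (n+1)) • ((y * z) * x)
            - (Nat.fib (n+1+2)) • (x * (y * z)) - (Nat.fib (n+1+1)) • (y * z)
          = x * y * ((Nat.fib (n+1)) • (x * z * x) + (Nat.fib n) • (z * x)
              - (Nat.fib (n+2)) • (x * z) - (Nat.fib (n+1)) • z)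
            - (Nat.fib (n+1)) • (g * (z * x)) + (Nat.fib (n+2)) • (g * z) := by
        intro z
        have h2 : Nat.fib (n+2) = Nat.fib n + Nat.fib (n+1) := Nat.fib_add_two
        have h2' : Nat.fib (n+1+1) = Nat.fib n + Nat.fib (n+1) := Nat.fib_add_two
        have h3 : Nat.fib (n+1+2) = Nat.fib (n+1) + Nat.fib (n+1+1) := Nat.fib_add_two
        rw [h3, h2', hg]
        simp only [mul_sub, sub_mul, mul_add, add_mul, smul_sub, smul_add, add_smul,
          mul_smul_comm, smul_mul_assoc, mul_assoc]
        module
      have hz : y ^ (n+1+1) = y * y ^ (n+1) := pow_succ' y (n+1)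
      rw [hz, hrec (y ^ (n+1))]
      refine I.add_mem (I.sub_mem (I.mul_mem_left _ _ ih)
        (I.nsmul_mem _ (I.mul_mem_right _ _ hgI))) (I.nsmul_mem _ (I.mul_mem_right _ _ hgI))
  obtain ⟨n, rfl⟩ : ∃ n, N = n + 1 := ⟨N - 1, (Nat.succ_pred_eq_of_pos hN).symm⟩
  have hn : 0 < n := by
    rcases Nat.eq_zero_or_pos n with rfl | h
    · simp [Nat.fib_one, Nat.dvd_one] at hdvd
      exact absurd hdvd hp.one_lt.ne'
    · exact h
  have hf1 : ((Nat.fib (n+1) : ZMod p)) = 0 := (ZMod.natCast_eq_zero_iff _ _).mpr hdvd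
  have hfn : ((Nat.fib n : ZMod p)) ≠ 0 := by
    intro h
    have := hmin n hn ((ZMod.natCast_eq_zero_iff _ _).mp h)
    omega
  have hf2 : ((Nat.fib (n+2) : ZMod p)) = (Nat.fib n : ZMod p) := by
    rw [Nat.fib_add_two]; push_cast [hf1]; ring
  have hkey := key n
  have heq : (Nat.fib (n+1)) • (x * y^(n+1) * x) + (Nat.fib n) • (y^(n+1) * x)
        - (Nat.fib (n+2)) • (x * y^(n+1)) - (Nat.fib (n+1)) • (y^(n+1))
      = (Nat.fib n : ZMod p) • (y^(n+1) * x - x * y^(n+1)) := by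
    rw [← Nat.cast_smul_eq_nsmul (ZMod p), ← Nat.cast_smul_eq_nsmul (ZMod p),
      ← Nat.cast_smul_eq_nsmul (ZMod p), ← Nat.cast_smul_eq_nsmul (ZMod p), hf1, hf2]
    simp [smul_sub]
  rw [heq] at hkey
  have hfin : y ^ (n+1) * x - x * y ^ (n+1)
      = ((Nat.fib n : ZMod p))⁻¹ • ((Nat.fib n : ZMod p) • (y^(n+1) * x - x * y^(n+1))) := by
    rw [smul_smul, inv_mul_cancel₀ hfn, one_smul]
  rw [hfin, Algebra.smul_def]
  exact I.mul_mem_left _ _ hkey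
end

section
/- In the free algebra Q⟨x,y⟩, for all m, n ≥ 1 the S-polynomial s_{m,n} = g_m · y^n x − x y^m · g_n equals −(a_n + b_m)·x y^{m+n} x + a_m·y^m x y^n x + b_n·x y^m x y^n − y^{m+n} x + x y^{m+n}. -/
theorem s_polynomial_identity
    (x y : FreeAlgebra ℚ (Fin 2)) (hx : x = FreeAlgebra.ι ℚ 0) (hy : y = FreeAlgebra.ι ℚ 1)
    (a b : ℕ → ℚ)
    (ha : ∀ n, a n = (Nat.fib (n - 1) : ℚ) / Nat.fib n)
    (hb : ∀ n, b n = (Nat.fib (n + 1) : ℚ) / Nat.fib n)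
    (g : ℕ → FreeAlgebra ℚ (Fin 2))
    (hg : ∀ n, g n = x * y ^ n * x + a n • (y ^ n * x) - b n • (x * y ^ n) - y ^ n)
    (m n : ℕ) (hm : 1 ≤ m) (hn : 1 ≤ n) :
    g m * (y ^ n * x) - (x * y ^ m) * g n =
      (-(a n + b m)) • (x * y ^ (m + n) * x) + a m • (y ^ m * x * y ^ n * x) +
        b n • (x * y ^ m * x * y ^ n) - y ^ (m + n) * x + x * y ^ (m + n) := by
  simp only [hg, pow_add]
  noncomm_ring
  simp only [neg_smul, one_smul]
  module
end

section
/- Let X be a finite alphabet and ≺ a total ordering on the free monoid ⟨X⟩ that is compatible with multiplication (v ≺ w implies avb ≺ awb for all a, b). Then ≺ is a well-ordering if and only if 1 ≺ w for every nonempty word w. -/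
/-!
If `w ≺ 1`, compatibility gives the infinite descent `⋯ ≺ w³ ≺ w² ≺ w ≺ 1`. Conversely, if
`1 ≺ x` for every letter `x`, compatibility shows that inserting letters into a word makes it
larger, so `u ⪯ v` whenever `u` is a subword of `v`. By Higman's lemma every infinite sequence of
words has a term that is a subword of a later one, which rules out infinite descending chains.
-/

theorem List.wellQuasiOrdered_sublist (α : Type*) [Finite α] :
    WellQuasiOrdered (List.Sublist : List α → List α → Prop) := by
  have higman := Set.PartiallyWellOrderedOn.partiallyWellOrderedOn_sublistForall₂ (· = ·)
    (Set.finite_univ (α := α)).partiallyWellOrderedOn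
  intro f
  obtain ⟨m, n, hmn, hsub⟩ := higman fun n => ⟨f n, fun _ _ => Set.mem_univ _⟩
  obtain ⟨l, hl, hsub⟩ := List.sublistForall₂_iff.1 hsub
  rw [List.forall₂_eq_eq_eq] at hl
  subst hl
  exact ⟨m, n, hmn, hsub⟩

theorem WellQuasiOrdered.wellFounded_of_not_rel {α : Type*} {s r : α → α → Prop} [IsTrans α r]
    (hs : WellQuasiOrdered s) (hsr : ∀ a b, s a b → ¬ r b a) : WellFounded r := by
  refine wellFounded_iff_isEmpty_descending_chain.2 ⟨fun ⟨f, hf⟩ => ?_⟩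
  obtain ⟨m, n, hmn, hfmn⟩ := hs f
  exact hsr _ _ hfmn (Nat.rel_of_forall_rel_succ_of_lt (Function.swap r) hf hmn)

namespace FreeMonoid

variable {X : Type*} {r : FreeMonoid X → FreeMonoid X → Prop}

theorem not_wellFounded_of_rel_one
    (hcomp : ∀ a b v w : FreeMonoid X, r v w → r (a * v * b) (a * w * b))
    {w : FreeMonoid X} (hw : r w 1) : ¬ WellFounded r := by
  rw [wellFounded_iff_isEmpty_descending_chain, not_isEmpty_iff]
  exact ⟨⟨(w ^ ·), fun n => by simpa [pow_succ] using hcomp (w ^ n) 1 w 1 hw⟩⟩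

theorem eq_or_rel_of_sublist [IsTrans _ r]
    (hcomp : ∀ a b v w : FreeMonoid X, r v w → r (a * v * b) (a * w * b))
    (hletter : ∀ x, r 1 (of x)) {u v : List X} (h : u.Sublist v) :
    ofList u = ofList v ∨ r (ofList u) (ofList v) := by
  induction h with
  | slnil => exact .inl rfl
  | @cons u v x _ ih =>
    have hv : r (ofList v) (ofList (x :: v)) := by
      simpa using hcomp 1 (ofList v) 1 (of x) (hletter x)
    exact .inr (ih.elim (· ▸ hv) (_root_.trans · hv))
  | @cons_cons u v x _ ih =>
    refine ih.imp (fun h => ?_) (fun h => ?_)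
    · rw [ofList_cons, h, ofList_cons]
    · simpa using hcomp (of x) 1 _ _ h

theorem wellFounded_of_forall_one_rel_of [Finite X] [IsStrictOrder _ r]
    (hcomp : ∀ a b v w : FreeMonoid X, r v w → r (a * v * b) (a * w * b))
    (hletter : ∀ x, r 1 (of x)) : WellFounded r := by
  refine WellQuasiOrdered.wellFounded_of_not_rel
    (s := fun u v : FreeMonoid X => u.toList.Sublist v.toList)
    (fun f => List.wellQuasiOrdered_sublist X (toList ∘ f)) fun u v h hvu => ?_
  have huv : u = v ∨ r u v := by
    simpa only [ofList_toList] using eq_or_rel_of_sublist hcomp hletter h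
  rcases huv with rfl | huv
  · exact irrefl _ hvu
  · exact irrefl _ (_root_.trans huv hvu)

end FreeMonoid

/-- A multiplication-compatible total (strict) ordering on the free monoid over a finite
alphabet is a well-ordering iff the empty word is smaller than every nonempty word. -/
theorem monomial_wellOrdering_iff
    (X : Type*) [Fintype X]
    (r : FreeMonoid X → FreeMonoid X → Prop)
    (hirr : ∀ v, ¬ r v v)
    (htrans : ∀ u v w, r u v → r v w → r u w)
    (htotal : ∀ v w, v ≠ w → r v w ∨ r w v)
    (hcomp : ∀ a b v w : FreeMonoid X, r v w → r (a * v * b) (a * w * b)) :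
    (∀ S : Set (FreeMonoid X), S.Nonempty → ∃ m ∈ S, ∀ s ∈ S, ¬ r s m) ↔
      (∀ w : FreeMonoid X, w ≠ 1 → r 1 w) := by
  have : IsStrictOrder _ r := { irrefl := hirr, trans := htrans }
  rw [← WellFounded.wellFounded_iff_has_min]
  constructor
  · intro hwf w hw
    exact (htotal 1 w hw.symm).resolve_right
      fun hw1 => FreeMonoid.not_wellFounded_of_rel_one hcomp hw1 hwf
  · intro hpos
    exact FreeMonoid.wellFounded_of_forall_one_rel_of hcomp
      fun x => hpos _ (FreeMonoid.of_ne_one x)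
end
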